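/- The rowing graphs of the rooted graphs F₁, F₂, F₃ satisfy: λ₁(F₁, 1⁸) < -136/67; λ₁(F₂, 1⁷) < -178/87; λ₁(F₃, 1⁴) < -λ'; λ₁(F₁, 0^∞) = -λ*; λ₁(F₂, 0^∞) ∈ (-136/67, -2); and λ₁(F₃, 0^∞) ∈ (-178/87, -2). -/

import Mathlib

/-- A rooted graph: a finite simple graph with a distinguished root vertex. -/
structure RootedGraph where
  V : Type
  [fintypeV : Fintype V]
  G : SimpleGraph V
  root : V

attribute [instance] RootedGraph.fintypeV

/-- One-step extension of a rooted graph: attach a new path vertex (the new root)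
to the old root, together with a clique of `k` new vertices each adjacent to
both the old root and the new path vertex. -/
def RootedGraph.extend (F : RootedGraph) (k : ℕ) : RootedGraph where
  V := F.V ⊕ Option (Fin k)
  G :=
    { Adj := fun a b =>
        match a, b with
        | Sum.inl u, Sum.inl w => F.G.Adj u w
        | Sum.inl u, Sum.inr _ => u = F.root
        | Sum.inr _, Sum.inl w => w = F.root
        | Sum.inr x, Sum.inr y => x ≠ y
      symm := by
        refine ⟨?_⟩
        rintro (u | x) (w | y) h
        · exact F.G.adj_symm h
        · exact h
        · exact h
        · exact h.symm
      loopless := by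
        refine ⟨?_⟩
        rintro (u | x) h
        · exact F.G.irrefl h
        · exact h rfl }
  root := Sum.inr none

/-- The rowing graph `(F, a)`. -/
def RootedGraph.rowing (F : RootedGraph) (a : List ℕ) : RootedGraph :=
  a.foldl RootedGraph.extend F

open scoped Classical in
/-- Adjacency matrix of (the graph of) a rooted graph. -/
noncomputable def RootedGraph.adjMat (F : RootedGraph) : Matrix F.V F.V ℝ :=
  Matrix.of fun u v => if F.G.Adj u v then 1 else 0

/-- The smallest adjacency eigenvalue of a rooted graph. -/
noncomputable def RootedGraph.lam1 (F : RootedGraph) : ℝ :=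
  sInf {t : ℝ | ∃ x : F.V → ℝ, x ≠ 0 ∧ F.adjMat.mulVec x = t • x}

/-- `F₁`: the path on 4 vertices `u₁u₂u₃u₄` rooted at `u₃`. -/
def F1 : RootedGraph := { V := Fin 4, G := SimpleGraph.pathGraph 4, root := 2 }

/-- `F₂`: the fan consisting of a path `p₁p₂p₃p₄` (vertices `0,1,2,3`) together with an
apex `r` (vertex `4`) adjacent to `p₁, p₂, p₃, p₄`, rooted at the apex `r`. -/
def F2 : RootedGraph :=
  { V := Fin 5,
    G := SimpleGraph.fromRel fun i j => (i.val + 1 = j.val ∧ j.val ≤ 3) ∨ i.val = 4,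
    root := 4 }

/-- `F₃`: the path on 6 vertices `w₁w₂w₃w₄w₅w₆` rooted at `w₅`. -/
def F3 : RootedGraph := { V := Fin 6, G := SimpleGraph.pathGraph 6, root := 4 }

/-!
`λ₁` is the minimum of the Rayleigh quotient `xᵀAx / xᵀx`, so a single test vector bounds it
from above. The bounds on `λ₁(F₁, 1⁸)`, `λ₁(F₂, 1⁷)`, `λ₁(F₃, 1⁴)` and the upper bounds `-2` for
the limits of `F₂` and `F₃` are certified by integer test vectors; for the limits this uses that
padding a vector by zero shows `n ↦ λ₁(F, 0ⁿ)` to be non-increasing.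

The lower bounds on the limits propagate a certificate along the path: if `A + λI - γ e_r e_rᵀ` is
positive semidefinite and `γ (λ - γ) ≥ 1`, then eliminating the new pendant root (a Schur
complement) shows the same for `(F, 0)` and its new root, so `λ₁(F, 0ⁿ) ≥ -λ` for every `n`. For
`F₁` this holds with `λ = λ* = s + s⁻¹`, `γ = s⁻¹`, `s = √ρ`, where `γ (λ - γ) = 1` exactly. In
that case an eigenvector of `A - γ e_r e_rᵀ` for `-λ` extends along the path with root values
multiplied by `-γ`, which yields Rayleigh quotients `-λ + O(γ²ⁿ)` and hence `λ₁(F₁, 0^∞) = -λ*`.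
-/

open Matrix Filter Topology

section DotProductSelf

variable {ι R : Type*} [Fintype ι] [Ring R] [LinearOrder R] [IsStrictOrderedRing R]

theorem Matrix.dotProduct_self_nonneg (x : ι → R) : 0 ≤ x ⬝ᵥ x :=
  Fintype.sum_nonneg fun i => mul_self_nonneg (x i)

theorem Matrix.dotProduct_self_pos {x : ι → R} (hx : x ≠ 0) : 0 < x ⬝ᵥ x :=
  (dotProduct_self_nonneg x).lt_of_ne (Ne.symm (dotProduct_self_eq_zero.not.mpr hx))

end DotProductSelf

theorem Matrix.IsHermitian.exists_eigenvalue_mul_dotProduct_self_le {ι : Type*} [Fintype ι]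
    [Nonempty ι] {A : Matrix ι ι ℝ} (hA : A.IsHermitian) :
    ∃ μ, (∃ x, x ≠ 0 ∧ A *ᵥ x = μ • x) ∧ ∀ x, μ * (x ⬝ᵥ x) ≤ x ⬝ᵥ A *ᵥ x := by
  classical
  let T := toEuclideanLin A
  let rayleigh (y : {y : EuclideanSpace ℝ ι // y ≠ 0}) : ℝ :=
    inner ℝ (T y) (y : EuclideanSpace ℝ ι) / ‖(y : EuclideanSpace ℝ ι)‖ ^ 2
  have hT : T.IsSymmetric := isSymmetric_toEuclideanLin_iff.mpr hA
  obtain ⟨v, hv⟩ := hT.hasEigenvalue_iInf_of_finiteDimensional.exists_hasEigenvector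
  refine ⟨⨅ y, rayleigh y, ⟨v.ofLp, by simpa using hv.2, ?_⟩, fun x => ?_⟩
  · exact congrArg WithLp.ofLp (Module.End.mem_genEigenspace_one.mp hv.1)
  rcases eq_or_ne x 0 with rfl | hx
  · simp
  have hbdd : BddBelow (Set.range rayleigh) := by
    refine ⟨-‖LinearMap.toContinuousLinearMap T‖, ?_⟩
    rintro _ ⟨y, rfl⟩
    exact neg_le_of_abs_le ((LinearMap.toContinuousLinearMap T).rayleighQuotient_le_norm y)
  have hnorm : ‖WithLp.toLp 2 x‖ ^ 2 = x ⬝ᵥ x := by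
    rw [← real_inner_self_eq_norm_sq]
    rfl
  have h : ⨅ y, rayleigh y ≤ (x ⬝ᵥ A *ᵥ x) / (x ⬝ᵥ x) := by
    rw [← hnorm]
    exact ciInf_le hbdd ⟨WithLp.toLp 2 x, by simpa using hx⟩
  rwa [le_div_iff₀ (dotProduct_self_pos hx)] at h

namespace RootedGraph

instance instDecidableEqExtend (F : RootedGraph) [DecidableEq F.V] (k : ℕ) :
    DecidableEq (F.extend k).V :=
  inferInstanceAs (DecidableEq (F.V ⊕ Option (Fin k)))

instance instDecidableRelAdjExtend (F : RootedGraph) [DecidableEq F.V] [DecidableRel F.G.Adj]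
    (k : ℕ) : DecidableRel (F.extend k).G.Adj
  | .inl u, .inl w => inferInstanceAs (Decidable (F.G.Adj u w))
  | .inl u, .inr _ => inferInstanceAs (Decidable (u = F.root))
  | .inr _, .inl w => inferInstanceAs (Decidable (w = F.root))
  | .inr o, .inr o' => inferInstanceAs (Decidable (o ≠ o'))

instance instDecidableEqRowing (F : RootedGraph) [DecidableEq F.V] :
    (a : List ℕ) → DecidableEq (F.rowing a).V
  | [] => inferInstanceAs (DecidableEq F.V)
  | k :: a => instDecidableEqRowing (F.extend k) a

instance instDecidableRelAdjRowing (F : RootedGraph) [DecidableEq F.V] [DecidableRel F.G.Adj] :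
    (a : List ℕ) → DecidableRel (F.rowing a).G.Adj
  | [] => inferInstanceAs (DecidableRel F.G.Adj)
  | k :: a => instDecidableRelAdjRowing (F.extend k) a

variable (F : RootedGraph)

instance : Nonempty F.V := ⟨F.root⟩

theorem adjMat_isHermitian : F.adjMat.IsHermitian := by
  ext u v
  simp only [adjMat, conjTranspose_apply, of_apply, star_trivial]
  rw [F.G.adj_comm]

theorem isLeast_lam1 :
    IsLeast {t : ℝ | ∃ x : F.V → ℝ, x ≠ 0 ∧ F.adjMat *ᵥ x = t • x} F.lam1 := by
  obtain ⟨μ, hμ, hle⟩ := F.adjMat_isHermitian.exists_eigenvalue_mul_dotProduct_self_le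
  have hleast : IsLeast {t : ℝ | ∃ x : F.V → ℝ, x ≠ 0 ∧ F.adjMat *ᵥ x = t • x} μ := by
    refine ⟨hμ, ?_⟩
    rintro t ⟨x, hx, hxt⟩
    have h := hle x
    rw [hxt, dotProduct_smul, smul_eq_mul] at h
    exact le_of_mul_le_mul_right h (dotProduct_self_pos hx)
  rwa [lam1, hleast.csInf_eq]

theorem lam1_mul_dotProduct_self_le (x : F.V → ℝ) :
    F.lam1 * (x ⬝ᵥ x) ≤ x ⬝ᵥ F.adjMat *ᵥ x := by
  obtain ⟨μ, hμ, hle⟩ := F.adjMat_isHermitian.exists_eigenvalue_mul_dotProduct_self_le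
  exact (mul_le_mul_of_nonneg_right (F.isLeast_lam1.2 hμ) (dotProduct_self_nonneg x)).trans
    (hle x)

theorem le_lam1 {c : ℝ} (h : ∀ x, c * (x ⬝ᵥ x) ≤ x ⬝ᵥ F.adjMat *ᵥ x) : c ≤ F.lam1 := by
  obtain ⟨x, hx, hxt⟩ := F.isLeast_lam1.1
  have hcx := h x
  rw [hxt, dotProduct_smul, smul_eq_mul] at hcx
  exact le_of_mul_le_mul_right hcx (dotProduct_self_pos hx)

theorem lam1_lt_of_dotProduct_lt {c : ℝ} (x : F.V → ℝ)
    (h : x ⬝ᵥ F.adjMat *ᵥ x < c * (x ⬝ᵥ x)) : F.lam1 < c :=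
  lt_of_mul_lt_mul_right ((F.lam1_mul_dotProduct_self_le x).trans_lt h)
    (dotProduct_self_nonneg x)

theorem rowing_replicate_succ (n k : ℕ) :
    F.rowing (List.replicate (n + 1) k) = (F.rowing (List.replicate n k)).extend k := by
  rw [List.replicate_succ', rowing, List.foldl_append]
  rfl

section Extend

variable {F} {k : ℕ}

def toExtend (k : ℕ) : F.V → (F.extend k).V := Sum.inl

def extendVec {R : Type*} (x : F.V → R) (a : R) : (F.extend 0).V → R := Sum.elim x fun _ => a

@[simp] theorem extendVec_comp_toExtend {R : Type*} (x : F.V → R) (a : R) :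
    extendVec x a ∘ toExtend 0 = x := rfl

@[simp] theorem extendVec_toExtend {R : Type*} (x : F.V → R) (a : R) (v : F.V) :
    extendVec x a (toExtend 0 v) = x v := rfl

@[simp] theorem extendVec_root {R : Type*} (x : F.V → R) (a : R) :
    extendVec x a (F.extend 0).root = a := rfl

@[simp] theorem adjMat_self (v : F.V) : F.adjMat v v = 0 := if_neg F.G.irrefl

@[simp] theorem adjMat_extend_toExtend (u w : F.V) :
    (F.extend k).adjMat (toExtend k u) (toExtend k w) = F.adjMat u w := rfl

open scoped Classical in
@[simp] theorem adjMat_extend_toExtend_root (u : F.V) :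
    (F.extend k).adjMat (toExtend k u) (F.extend k).root = if u = F.root then 1 else 0 := rfl

open scoped Classical in
@[simp] theorem adjMat_extend_root_toExtend (u : F.V) :
    (F.extend k).adjMat (F.extend k).root (toExtend k u) = if u = F.root then 1 else 0 := rfl

theorem toExtend_ne_root (v : F.V) : toExtend 0 v ≠ (F.extend 0).root := Sum.inl_ne_inr

theorem forall_extend_zero {P : (F.extend 0).V → Prop} :
    (∀ v, P v) ↔ (∀ u, P (toExtend 0 u)) ∧ P (F.extend 0).root := by
  refine ⟨fun h => ⟨fun u => h _, h _⟩, fun ⟨h, hroot⟩ v => ?_⟩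
  rcases v with u | _ | ⟨i⟩
  exacts [h u, hroot, i.elim0]

theorem sum_extend_zero {M : Type*} [AddCommMonoid M] (f : (F.extend 0).V → M) :
    ∑ v, f v = ∑ v, f (toExtend 0 v) + f (F.extend 0).root :=
  (Fintype.sum_sum_type (α₁ := F.V) (α₂ := Option (Fin 0)) f).trans
    (by simp only [Finset.univ_unique, Finset.sum_singleton]; rfl)

open scoped Classical in
theorem adjMat_extend_zero_mulVec_comp_toExtend (y : (F.extend 0).V → ℝ) :
    ((F.extend 0).adjMat *ᵥ y) ∘ toExtend 0 =
      F.adjMat *ᵥ (y ∘ toExtend 0) + Pi.single F.root (y (F.extend 0).root) := by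
  ext v
  simp only [Function.comp_apply, mulVec, dotProduct, sum_extend_zero, Pi.add_apply,
    Pi.single_apply, adjMat_extend_toExtend, adjMat_extend_toExtend_root]
  split_ifs <;> simp

theorem adjMat_extend_zero_mulVec_root (y : (F.extend 0).V → ℝ) :
    ((F.extend 0).adjMat *ᵥ y) (F.extend 0).root = y (toExtend 0 F.root) := by
  classical
  simp [mulVec, dotProduct, sum_extend_zero, ite_mul]

theorem dotProduct_self_extend_zero (y : (F.extend 0).V → ℝ) :
    y ⬝ᵥ y = (y ∘ toExtend 0) ⬝ᵥ (y ∘ toExtend 0) + y (F.extend 0).root ^ 2 := by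
  rw [dotProduct, sum_extend_zero, sq]
  rfl

theorem dotProduct_adjMat_extend_zero (y : (F.extend 0).V → ℝ) :
    y ⬝ᵥ (F.extend 0).adjMat *ᵥ y = (y ∘ toExtend 0) ⬝ᵥ F.adjMat *ᵥ (y ∘ toExtend 0) +
      2 * y (toExtend 0 F.root) * y (F.extend 0).root := by
  classical
  rw [dotProduct, sum_extend_zero, adjMat_extend_zero_mulVec_root]
  change (y ∘ toExtend 0) ⬝ᵥ (((F.extend 0).adjMat *ᵥ y) ∘ toExtend 0) + _ = _
  rw [adjMat_extend_zero_mulVec_comp_toExtend, dotProduct_add, dotProduct_single]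
  simp only [Function.comp_apply]
  ring

variable (F)

theorem lam1_extend_zero_le : (F.extend 0).lam1 ≤ F.lam1 := by
  obtain ⟨x, hx, hxt⟩ := F.isLeast_lam1.1
  have h := (F.extend 0).lam1_mul_dotProduct_self_le (extendVec x 0)
  rw [dotProduct_self_extend_zero, dotProduct_adjMat_extend_zero] at h
  simp only [extendVec_comp_toExtend, extendVec_root, hxt, dotProduct_smul, smul_eq_mul] at h
  exact le_of_mul_le_mul_right (by simpa using h) (dotProduct_self_pos hx)

theorem antitone_lam1_rowing_zero : Antitone fun n => (F.rowing (List.replicate n 0)).lam1 :=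
  antitone_nat_of_succ_le fun n => by
    rw [rowing_replicate_succ]
    exact lam1_extend_zero_le _

end Extend

section RootShift

variable {F} {lam γ : ℝ}

def RootShiftedPSD (lam γ : ℝ) : Prop :=
  ∀ x : F.V → ℝ, γ * x F.root ^ 2 ≤ lam * (x ⬝ᵥ x) + x ⬝ᵥ F.adjMat *ᵥ x

theorem RootShiftedPSD.neg_le_lam1 (h : F.RootShiftedPSD lam γ) (hγ : 0 ≤ γ) : -lam ≤ F.lam1 :=
  F.le_lam1 fun x => by nlinarith [h x, mul_nonneg hγ (sq_nonneg (x F.root))]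

theorem RootShiftedPSD.extend_zero (h : F.RootShiftedPSD lam γ) (hγ : 0 < γ)
    (hγlam : 1 ≤ γ * (lam - γ)) : (F.extend 0).RootShiftedPSD lam γ := by
  intro y
  have hx := h (y ∘ toExtend 0)
  rw [dotProduct_self_extend_zero, dotProduct_adjMat_extend_zero]
  set a := y (F.extend 0).root
  set r := y (toExtend 0 F.root)
  change γ * r ^ 2 ≤ _ at hx
  -- `γ ((λ - γ) a² + 2 r a + γ r²) = (γ r + a)² + (γ (λ - γ) - 1) a²`
  nlinarith [sq_nonneg (γ * r + a), sq_nonneg a]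

theorem RootShiftedPSD.rowing_zero (h : F.RootShiftedPSD lam γ) (hγ : 0 < γ)
    (hγlam : 1 ≤ γ * (lam - γ)) (n : ℕ) :
    (F.rowing (List.replicate n 0)).RootShiftedPSD lam γ := by
  induction n with
  | zero => exact h
  | succ n ih =>
    rw [rowing_replicate_succ]
    exact ih.extend_zero hγ hγlam

theorem RootShiftedPSD.neg_le_of_tendsto (h : F.RootShiftedPSD lam γ) (hγ : 0 < γ)
    (hγlam : 1 ≤ γ * (lam - γ)) {L : ℝ}
    (hL : Tendsto (fun n => (F.rowing (List.replicate n 0)).lam1) atTop (𝓝 L)) : -lam ≤ L :=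
  ge_of_tendsto' hL fun n => (h.rowing_zero hγ hγlam n).neg_le_lam1 hγ.le

open scoped Classical in
def IsRootShiftedEigenvector (lam γ : ℝ) (x : F.V → ℝ) : Prop :=
  ∀ v, (F.adjMat *ᵥ x) v = -lam * x v + if v = F.root then γ * x F.root else 0

namespace IsRootShiftedEigenvector

variable {x : F.V → ℝ}

theorem dotProduct_adjMat (hx : F.IsRootShiftedEigenvector lam γ x) :
    x ⬝ᵥ F.adjMat *ᵥ x = -lam * (x ⬝ᵥ x) + γ * x F.root ^ 2 := by
  classical
  have hsum : ∑ v, x v * (-lam * x v) = -lam * ∑ v, x v * x v := by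
    rw [Finset.mul_sum]
    exact Finset.sum_congr rfl fun v _ => by ring
  simp only [dotProduct, hx _, mul_add, Finset.sum_add_distrib, mul_ite, mul_zero,
    Finset.sum_ite_eq', Finset.mem_univ, if_true, hsum]
  ring

theorem extend_zero (hx : F.IsRootShiftedEigenvector lam γ x) (hγlam : γ * (lam - γ) = 1) :
    (F.extend 0).IsRootShiftedEigenvector lam γ (extendVec x (-γ * x F.root)) := by
  classical
  refine forall_extend_zero.mpr ⟨fun u => ?_, ?_⟩
  · have h := congrFun (adjMat_extend_zero_mulVec_comp_toExtend (extendVec x (-γ * x F.root))) u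
    rw [Function.comp_apply] at h
    simp only [h, extendVec_comp_toExtend, extendVec_toExtend, extendVec_root, Pi.add_apply,
      hx u, Pi.single_apply, toExtend_ne_root, if_false]
    split_ifs <;> ring
  · rw [adjMat_extend_zero_mulVec_root]
    simp only [extendVec_toExtend, extendVec_root, if_pos]
    linear_combination (-x F.root) * hγlam

theorem exists_rowing_zero (hx : F.IsRootShiftedEigenvector lam γ x) (hγlam : γ * (lam - γ) = 1)
    (n : ℕ) : ∃ y : (F.rowing (List.replicate n 0)).V → ℝ,
      (F.rowing (List.replicate n 0)).IsRootShiftedEigenvector lam γ y ∧ x ⬝ᵥ x ≤ y ⬝ᵥ y ∧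
      y (F.rowing (List.replicate n 0)).root ^ 2 = (γ ^ 2) ^ n * x F.root ^ 2 := by
  induction n with
  | zero => exact ⟨x, hx, le_rfl, by rw [pow_zero, one_mul]; rfl⟩
  | succ n ih =>
    obtain ⟨y, hy, hxy, hroot⟩ := ih
    rw [rowing_replicate_succ]
    refine ⟨_, hy.extend_zero hγlam, ?_, ?_⟩
    · rw [dotProduct_self_extend_zero, extendVec_comp_toExtend]
      nlinarith
    · rw [extendVec_root, mul_pow, neg_sq, hroot]
      ring

theorem lam1_rowing_zero_le (hx : F.IsRootShiftedEigenvector lam γ x)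
    (hγlam : γ * (lam - γ) = 1) (hγ : 0 ≤ γ) (hx0 : x ≠ 0) (n : ℕ) :
    (F.rowing (List.replicate n 0)).lam1 ≤ -lam + γ * x F.root ^ 2 / (x ⬝ᵥ x) * (γ ^ 2) ^ n := by
  obtain ⟨y, hy, hxy, hroot⟩ := hx.exists_rowing_zero hγlam n
  have hxpos := dotProduct_self_pos hx0
  have h := (F.rowing (List.replicate n 0)).lam1_mul_dotProduct_self_le y
  rw [hy.dotProduct_adjMat, hroot] at h
  have hC : 0 ≤ γ * ((γ ^ 2) ^ n * x F.root ^ 2) := by positivity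
  have hdiv : (F.rowing (List.replicate n 0)).lam1 + lam ≤
      γ * ((γ ^ 2) ^ n * x F.root ^ 2) / (y ⬝ᵥ y) :=
    (le_div_iff₀ (hxpos.trans_le hxy)).mpr (by linarith)
  have hyx := div_le_div_of_nonneg_left hC hxpos hxy
  calc _ ≤ -lam + γ * ((γ ^ 2) ^ n * x F.root ^ 2) / (x ⬝ᵥ x) := by linarith
    _ = _ := by ring

theorem le_neg_of_tendsto (hx : F.IsRootShiftedEigenvector lam γ x) (hγlam : γ * (lam - γ) = 1)
    (hγ : 0 ≤ γ) (hγ1 : γ < 1) (hx0 : x ≠ 0) {L : ℝ}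
    (hL : Tendsto (fun n => (F.rowing (List.replicate n 0)).lam1) atTop (𝓝 L)) : L ≤ -lam := by
  have hγ2 : γ ^ 2 < 1 := by nlinarith
  have hlim : Tendsto (fun n : ℕ => -lam + γ * x F.root ^ 2 / (x ⬝ᵥ x) * (γ ^ 2) ^ n) atTop
      (𝓝 (-lam)) := by
    simpa using ((tendsto_pow_atTop_nhds_zero_of_lt_one (sq_nonneg γ) hγ2).const_mul
      (γ * x F.root ^ 2 / (x ⬝ᵥ x))).const_add (-lam)
  exact le_of_tendsto_of_tendsto' hL hlim (hx.lam1_rowing_zero_le hγlam hγ hx0)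

end IsRootShiftedEigenvector

end RootShift

section IntegerTestVectors

theorem adjMat_eq_adjMatrix [DecidableRel F.G.Adj] : F.adjMat = F.G.adjMatrix ℝ := by
  ext u v
  simp only [adjMat, of_apply, SimpleGraph.adjMatrix_apply]
  congr

theorem intCast_dotProduct_adjMatrix [DecidableRel F.G.Adj] (z : F.V → ℤ) :
    ((z ⬝ᵥ F.G.adjMatrix ℤ *ᵥ z : ℤ) : ℝ) = (Int.cast ∘ z) ⬝ᵥ F.adjMat *ᵥ (Int.cast ∘ z) := by
  rw [adjMat_eq_adjMatrix]
  simp only [dotProduct, mulVec, SimpleGraph.adjMatrix_apply, Function.comp_apply]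
  push_cast
  rfl

/-- Over `ℤ` and with decidable adjacency, `hq` and `hn` can be checked by `decide`. -/
theorem lam1_lt_of_intVec [DecidableRel F.G.Adj] (z : F.V → ℤ) {q n : ℤ} {c : ℝ}
    (hq : z ⬝ᵥ F.G.adjMatrix ℤ *ᵥ z = q) (hn : z ⬝ᵥ z = n) (hc : q < c * n) : F.lam1 < c := by
  have hn' : ((Int.cast ∘ z) ⬝ᵥ (Int.cast ∘ z) : ℝ) = n := by
    rw [← hn]
    push_cast [dotProduct]
    rfl
  refine F.lam1_lt_of_dotProduct_lt (Int.cast ∘ z) ?_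
  rwa [← intCast_dotProduct_adjMatrix, hq, hn']

/-- A vector on `H.rowing (replicate l.length k)`: `x` on `H`, then, layer by layer, the value `p`
on the new path vertex and the values `c` on the `k` new clique vertices. -/
def layeredVec {R : Type*} {k : ℕ} :
    (H : RootedGraph) → (H.V → R) → (l : List (R × (Fin k → R))) →
      (H.rowing (List.replicate l.length k)).V → R
  | _, x, [] => x
  | _, x, (p, c) :: l => layeredVec _ (Sum.elim x (Option.elim' p c)) l

end IntegerTestVectors

end RootedGraph

open RootedGraph

instance (n : ℕ) : DecidableRel (SimpleGraph.pathGraph n).Adj := fun _ _ =>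
  decidable_of_iff _ SimpleGraph.pathGraph_adj.symm

instance : DecidableEq F1.V := inferInstanceAs (DecidableEq (Fin 4))
instance : DecidableRel F1.G.Adj := inferInstanceAs (DecidableRel (SimpleGraph.pathGraph 4).Adj)
instance : DecidableEq F2.V := inferInstanceAs (DecidableEq (Fin 5))
instance : DecidableRel F2.G.Adj := fun a b =>
  decidable_of_iff _ (SimpleGraph.fromRel_adj _ a b).symm
instance : DecidableEq F3.V := inferInstanceAs (DecidableEq (Fin 6))
instance : DecidableRel F3.G.Adj := inferInstanceAs (DecidableRel (SimpleGraph.pathGraph 6).Adj)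

-- The test vectors below are integer approximations of eigenvectors for `λ₁`.
theorem lam1_F1_rowing_one_lt : (F1.rowing (List.replicate 8 1)).lam1 < -(136 / 67) :=
  lam1_lt_of_intVec _ (layeredVec F1 ![-385, 781, -1200, 591]
      [(932, ![132]), (-719, ![-105]), (549, ![84]), (-411, ![-68]), (297, ![56]), (-201, ![-47]),
        (116, ![42]), (-38, ![-38])])
    (q := -9328572) (n := 4595566) (by decide) (by decide) (by norm_num)

theorem lam1_F2_rowing_one_lt : (F2.rowing (List.replicate 7 1)).lam1 < -(178 / 87) :=
  lam1_lt_of_intVec _ (layeredVec F2 ![313, 160, 160, 313, -800]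
      [(588, ![104]), (-428, ![-78]), (307, ![59]), (-215, ![-45]), (141, ![36]), (-80, ![-30]),
        (26, ![26])])
    (q := -3291770) (n := 1608775) (by decide) (by decide) (by norm_num)

theorem sqrt_two_add_sqrt_five_lt : √(2 + √5) < 973158 / 472713 := by
  have h5 : √5 < 2237 / 1000 := by
    rw [Real.sqrt_lt' (by norm_num)]
    norm_num
  rw [Real.sqrt_lt' (by norm_num)]
  linarith

theorem lam1_F3_rowing_one_lt : (F3.rowing (List.replicate 4 1)).lam1 < -√(2 + √5) :=
  lam1_lt_of_intVec _ (layeredVec F3 ![-64, 132, -207, 295, -400, 194]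
      [(272, ![62]), (-175, ![-47]), (98, ![37]), (-32, ![-32])])
    (q := -973158) (n := 472713) (by decide) (by decide)
    (by push_cast; linarith [sqrt_two_add_sqrt_five_lt])

theorem lam1_F2_rowing_zero_lt : (F2.rowing (List.replicate 8 0)).lam1 < -2 :=
  lam1_lt_of_intVec _ (layeredVec F2 ![40, 20, 20, 40, -100]
      [(83, ![]), (-69, ![]), (56, ![]), (-45, ![]), (35, ![]), (-25, ![]), (16, ![]), (-8, ![])])
    (q := -66778) (n := 32981) (by decide) (by decide) (by norm_num)

theorem lam1_F3_rowing_zero_lt : (F3.rowing (List.replicate 10 0)).lam1 < -2 :=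
  lam1_lt_of_intVec _ (layeredVec F3 ![-17, 34, -54, 75, -100, 49]
      [(81, ![]), (-65, ![]), (52, ![]), (-41, ![]), (32, ![]), (-25, ![]), (19, ![]), (-13, ![]),
        (9, ![]), (-4, ![])])
    (q := -81456) (n := 39834) (by decide) (by decide) (by norm_num)

theorem F1_adjMat_mulVec (x : Fin 4 → ℝ) (i : Fin 4) :
    (F1.adjMat *ᵥ x) i = ![x 1, x 0 + x 2, x 1 + x 3, x 2] i := by
  change ∑ j : Fin 4, F1.adjMat i j * x j = _
  fin_cases i <;> simp [Fin.sum_univ_four, adjMat_eq_adjMatrix, SimpleGraph.adjMatrix_apply, F1,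
    SimpleGraph.pathGraph_adj]

theorem F2_adjMat_mulVec (x : Fin 5 → ℝ) (i : Fin 5) : (F2.adjMat *ᵥ x) i =
    ![x 1 + x 4, x 0 + x 2 + x 4, x 1 + x 3 + x 4, x 2 + x 4, x 0 + x 1 + x 2 + x 3] i := by
  change ∑ j : Fin 5, F2.adjMat i j * x j = _
  fin_cases i <;> simp [Fin.sum_univ_five, adjMat_eq_adjMatrix, SimpleGraph.adjMatrix_apply, F2]

theorem F3_adjMat_mulVec (x : Fin 6 → ℝ) (i : Fin 6) :
    (F3.adjMat *ᵥ x) i = ![x 1, x 0 + x 2, x 1 + x 3, x 2 + x 4, x 3 + x 5, x 4] i := by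
  change ∑ j : Fin 6, F3.adjMat i j * x j = _
  fin_cases i <;> simp [Fin.sum_univ_six, adjMat_eq_adjMatrix, SimpleGraph.adjMatrix_apply, F3,
    SimpleGraph.pathGraph_adj]

theorem F1_rootShiftedPSD {s : ℝ} (hs : 0 < s) (h6 : s ^ 6 = s ^ 2 + 1) :
    F1.RootShiftedPSD (s + s⁻¹) s⁻¹ := by
  intro (x : Fin 4 → ℝ)
  change _ * x 2 ^ 2 ≤ _ * ∑ i : Fin 4, x i * x i + ∑ i : Fin 4, x i * (F1.adjMat *ᵥ x) i
  simp only [Fin.sum_univ_four, F1_adjMat_mulVec, cons_val_zero, cons_val_one, cons_val]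
  refine sub_nonneg.mp (nonneg_of_mul_nonneg_right ?_
    (by positivity : 0 < s * (s ^ 2 + 1) * (s ^ 4 + s ^ 2 + 1)))
  -- an `LDLᵀ` factorisation, valid modulo `s⁶ = s² + 1`
  have hsos : 0 ≤ (s ^ 4 + s ^ 2 + 1) * ((s ^ 2 + 1) * x 0 + s * x 1) ^ 2 +
      ((s ^ 4 + s ^ 2 + 1) * x 1 + s * (s ^ 2 + 1) * x 2) ^ 2 +
      (s ^ 4 + s ^ 2 + 1) * ((s ^ 2 + 1) * x 3 + s * x 2) ^ 2 := by positivity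
  refine hsos.trans_eq ?_
  field_simp
  linear_combination (-s ^ 2 * x 2 ^ 2) * h6

-- The squares in the next two proofs come from an `LDLᵀ` factorisation of `A + λI - γ e_r e_rᵀ`.
theorem F2_rootShiftedPSD : F2.RootShiftedPSD (885 / 436) (526 / 625) := by
  intro (x : Fin 5 → ℝ)
  change _ * x 4 ^ 2 ≤ _ * ∑ i : Fin 5, x i * x i + ∑ i : Fin 5, x i * (F2.adjMat *ᵥ x) i
  simp only [Fin.sum_univ_five, F2_adjMat_mulVec, cons_val_zero, cons_val_one, cons_val]
  nlinarith [sq_nonneg (x 0 + 436/885 * x 1 + 436/885 * x 4),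
    sq_nonneg (x 1 + 385860/593129 * x 2 + 436/1321 * x 4),
    sq_nonneg (x 2 + 258604244/356684205 * x 3 + 195764/403033 * x 4),
    sq_nonneg (x 3 + 385860/978989 * x 4), sq_nonneg (x 4)]

theorem F3_rootShiftedPSD : F3.RootShiftedPSD (2537 / 1240) (461 / 571) := by
  intro (x : Fin 6 → ℝ)
  change _ * x 4 ^ 2 ≤ _ * ∑ i : Fin 6, x i * x i + ∑ i : Fin 6, x i * (F3.adjMat *ᵥ x) i
  simp only [Fin.sum_univ_six, F3_adjMat_mulVec, cons_val_zero, cons_val_one, cons_val]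
  nlinarith [sq_nonneg (x 0 + 1240/2537 * x 1),
    sq_nonneg (x 1 + 3145880/4898769 * x 2),
    sq_nonneg (x 2 + 6074473560/8527285753 * x 3),
    sq_nonneg (x 3 + 10573834333720/14101376740961 * x 4),
    sq_nonneg (1240/2537 * x 4 + x 5), sq_nonneg (x 4)]

theorem F1_isRootShiftedEigenvector {s : ℝ} (hs : 0 < s) (h6 : s ^ 6 = s ^ 2 + 1) :
    F1.IsRootShiftedEigenvector (s + s⁻¹) s⁻¹
      ![s ^ 2 * (s ^ 2 + 1), -(s * (s ^ 2 + 1) ^ 2), (s ^ 4 + s ^ 2 + 1) * (s ^ 2 + 1),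
        -(s * (s ^ 4 + s ^ 2 + 1))] := by
  intro (i : Fin 4)
  rw [F1_adjMat_mulVec]
  fin_cases i <;>
    simp only [F1, cons_val_zero, cons_val_one, cons_val, Fin.zero_eta, Fin.mk_one,
      Fin.reduceFinMk, Fin.reduceEq, ↓reduceIte, add_zero] <;>
    field_simp
  · ring
  · linear_combination s ^ 2 * h6

theorem eq_of_tendsto_lam1_F1_rowing_zero {s L : ℝ} (hs : 1 < s) (h6 : s ^ 6 = s ^ 2 + 1)
    (hL : Tendsto (fun n => (F1.rowing (List.replicate n 0)).lam1) atTop (𝓝 L)) :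
    L = -(s + s⁻¹) := by
  have hs0 : 0 < s := zero_lt_one.trans hs
  have hγlam : s⁻¹ * (s + s⁻¹ - s⁻¹) = 1 := by
    rw [add_sub_cancel_right, inv_mul_cancel₀ hs0.ne']
  refine le_antisymm ((F1_isRootShiftedEigenvector hs0 h6).le_neg_of_tendsto hγlam
    (inv_nonneg.mpr hs0.le) (inv_lt_one_of_one_lt₀ hs) (fun h => ?_) hL)
    ((F1_rootShiftedPSD hs0 h6).neg_le_of_tendsto (inv_pos.mpr hs0) hγlam.ge hL)
  exact (by positivity : (0 : ℝ) < (s ^ 4 + s ^ 2 + 1) * (s ^ 2 + 1)).ne' (congrFun h 2)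

/-- Concrete bounds: `λ₁(F₁, 1⁸) < -136/67`, `λ₁(F₂, 1⁷) < -178/87`,
`λ₁(F₃, 1⁴) < -λ'`, `λ₁(F₁, 0^∞) = -λ*`, `λ₁(F₂, 0^∞) ∈ (-136/67, -2)`, and
`λ₁(F₃, 0^∞) ∈ (-178/87, -2)`, where `λ' = √(2 + √5)`, `λ* = √ρ + 1/√ρ`, and `ρ` is
the unique real root of `x³ = x + 1`. -/
theorem lam1_rowing_concrete_bounds (ρ : ℝ) (hρ : ρ ^ 3 = ρ + 1)
    (L1 L2 L3 : ℝ)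
    (hL1 : Filter.Tendsto (fun n : ℕ => (F1.rowing (List.replicate n 0)).lam1)
      Filter.atTop (nhds L1))
    (hL2 : Filter.Tendsto (fun n : ℕ => (F2.rowing (List.replicate n 0)).lam1)
      Filter.atTop (nhds L2))
    (hL3 : Filter.Tendsto (fun n : ℕ => (F3.rowing (List.replicate n 0)).lam1)
      Filter.atTop (nhds L3)) :
    (F1.rowing (List.replicate 8 1)).lam1 < -(136 / 67 : ℝ) ∧
    (F2.rowing (List.replicate 7 1)).lam1 < -(178 / 87 : ℝ) ∧
    (F3.rowing (List.replicate 4 1)).lam1 < -Real.sqrt (2 + Real.sqrt 5) ∧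
    L1 = -(Real.sqrt ρ + (Real.sqrt ρ)⁻¹) ∧
    L2 ∈ Set.Ioo (-(136 / 67 : ℝ)) (-2 : ℝ) ∧
    L3 ∈ Set.Ioo (-(178 / 87 : ℝ)) (-2 : ℝ) := by
  have hρ1 : 1 < ρ := by nlinarith [sq_nonneg ρ, sq_nonneg (ρ - 1), sq_nonneg (ρ + 1)]
  have hs1 : 1 < √ρ := Real.lt_sqrt_of_sq_lt (by linarith)
  have hs6 : √ρ ^ 6 = √ρ ^ 2 + 1 := by
    rw [show 6 = 2 * 3 from rfl, pow_mul, Real.sq_sqrt (by linarith), hρ]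
  have hL2lo := F2_rootShiftedPSD.neg_le_of_tendsto (by norm_num) (by norm_num) hL2
  have hL3lo := F3_rootShiftedPSD.neg_le_of_tendsto (by norm_num) (by norm_num) hL3
  have hL2hi :=
    ((antitone_lam1_rowing_zero F2).le_of_tendsto hL2 8).trans_lt lam1_F2_rowing_zero_lt
  have hL3hi :=
    ((antitone_lam1_rowing_zero F3).le_of_tendsto hL3 10).trans_lt lam1_F3_rowing_zero_lt
  exact ⟨lam1_F1_rowing_one_lt, lam1_F2_rowing_one_lt, lam1_F3_rowing_one_lt,
    eq_of_tendsto_lam1_F1_rowing_zero hs1 hs6 hL1, ⟨by linarith, hL2hi⟩, ⟨by linarith, hL3hi⟩⟩
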